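/- Under the DMD-GC scheme with approximation error ρ_{t,i_k} = η³/(2σ), for each t ∈ {1,…,T} and each k ∈ F_t, the consecutive intermediate iterates satisfy ‖x_{t,i_k+1} − x_{t,i_k}‖ ≤ (ηG⋆ + 2η²)/σ + η²ξG⋆/σ². -/

import Mathlib

/-!
Let `w` be the exact minimiser over `X` of the proximal objective
`A v = c v + B_ψ(v; y) / η`, where `y = x_{t,i_k}` and `c = ∇f_k(y)`. First-order optimality of
`w`, tested at `y` and combined with `σ‖w - y‖² ≤ (∇ψ w - ∇ψ y)(w - y)`, gives
`‖w - y‖ ≤ η G⋆ / σ`. Tested at `z = x_{t,i_k+1}` and combined with the three-point identity, it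
gives `B_ψ(z; w) ≤ η (A z - A w) ≤ η⁴ / (2σ)`, hence `‖z - w‖ ≤ η² / σ` by strong convexity.
The triangle inequality then gives a bound below the claimed one.
-/

open Finset

section

variable {E : Type*} [NormedAddCommGroup E] [NormedSpace ℝ E]

theorem IsMinOn.hasFDerivAt_apply_sub_nonneg {X : Set E} {g : E → ℝ} {g' : E →L[ℝ] ℝ} {w v : E}
    (hX : Convex ℝ X) (hmin : IsMinOn g X w) (hg : HasFDerivAt g g' w) (hw : w ∈ X)
    (hv : v ∈ X) : 0 ≤ g' (v - w) :=
  hmin.localize.hasFDerivWithinAt_nonneg hg.hasFDerivWithinAt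
    (sub_mem_posTangentConeAt_of_segment_subset (hX.segment_subset hw hv))

noncomputable def bregman (ψ : E → ℝ) (a b : E) : ℝ := ψ a - ψ b - fderiv ℝ ψ b (a - b)

section Bregman

variable {ψ : E → ℝ}

theorem bregman_sub_bregman (a b c : E) :
    bregman ψ a c - bregman ψ b c = bregman ψ a b + (fderiv ℝ ψ b - fderiv ℝ ψ c) (a - b) := by
  simp only [bregman, sub_apply, map_sub]
  ring

theorem bregman_add_bregman_swap (a b : E) :
    bregman ψ a b + bregman ψ b a = (fderiv ℝ ψ a - fderiv ℝ ψ b) (a - b) := by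
  simp only [bregman, sub_apply, map_sub]
  ring

theorem hasFDerivAt_bregman_left {y w : E} (hψ : DifferentiableAt ℝ ψ w) :
    HasFDerivAt (fun v => bregman ψ v y) (fderiv ℝ ψ w - fderiv ℝ ψ y) w := by
  have hlin : HasFDerivAt (fun v => fderiv ℝ ψ y (v - y)) (fderiv ℝ ψ y) w :=
    (fderiv ℝ ψ y).hasFDerivAt.comp w ((hasFDerivAt_id w).sub_const y)
  exact (hψ.hasFDerivAt.sub_const (ψ y)).sub hlin

end Bregman

section ProxStep

variable {X : Set E} {ψ : E → ℝ} {σ η G : ℝ} {c : E →L[ℝ] ℝ} {y w z : E}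

theorem IsMinOn.prox_optimality (hX : Convex ℝ X) (hη : 0 < η) (hψ : DifferentiableAt ℝ ψ w)
    (hmin : IsMinOn (fun v => c v + bregman ψ v y / η) X w) (hw : w ∈ X) {v : E} (hv : v ∈ X) :
    0 ≤ η * c (v - w) + (fderiv ℝ ψ w - fderiv ℝ ψ y) (v - w) := by
  have hderiv : HasFDerivAt (fun v => c v + bregman ψ v y / η)
      (c + η⁻¹ • (fderiv ℝ ψ w - fderiv ℝ ψ y)) w := by
    have h := c.hasFDerivAt.fun_add ((hasFDerivAt_bregman_left (y := y) hψ).fun_const_smul η⁻¹)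
    simp only [smul_eq_mul, ← div_eq_inv_mul] at h
    exact h
  have h := hmin.hasFDerivAt_apply_sub_nonneg hX hderiv hw hv
  simp only [add_apply, smul_apply, smul_eq_mul] at h
  have := mul_nonneg hη.le h
  rwa [mul_add, mul_inv_cancel_left₀ hη.ne'] at this

theorem IsMinOn.norm_sub_le_of_prox (hX : Convex ℝ X) (hσ : 0 < σ) (hη : 0 < η)
    (hψ : DifferentiableAt ℝ ψ w)
    (hψsc : ∀ a ∈ X, ∀ b ∈ X, σ / 2 * ‖a - b‖ ^ 2 ≤ bregman ψ a b)
    (hc : ‖c‖ ≤ G) (hmin : IsMinOn (fun v => c v + bregman ψ v y / η) X w) (hw : w ∈ X)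
    (hy : y ∈ X) : ‖w - y‖ ≤ η * G / σ := by
  have hopt := hmin.prox_optimality hX hη hψ hw hy
  have hmono : σ * ‖w - y‖ ^ 2 ≤ (fderiv ℝ ψ w - fderiv ℝ ψ y) (w - y) := by
    have h₁ := hψsc w hw y hy
    have h₂ := hψsc y hy w hw
    rw [norm_sub_rev y w] at h₂
    linarith [bregman_add_bregman_swap (ψ := ψ) w y]
  have hlin : η * c (y - w) ≤ η * (G * ‖w - y‖) := by
    refine mul_le_mul_of_nonneg_left ?_ hη.le
    calc c (y - w) ≤ ‖c‖ * ‖y - w‖ := (le_abs_self _).trans (c.le_opNorm _)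
      _ ≤ G * ‖w - y‖ := by
        rw [norm_sub_rev]; exact mul_le_mul_of_nonneg_right hc (norm_nonneg _)
  have hflip :
      (fderiv ℝ ψ w - fderiv ℝ ψ y) (y - w) = -(fderiv ℝ ψ w - fderiv ℝ ψ y) (w - y) := by
    rw [← map_neg, neg_sub]
  rw [hflip] at hopt
  rw [le_div_iff₀ hσ]
  rcases (norm_nonneg (w - y)).eq_or_lt with h | h
  · rw [← h, zero_mul]; exact mul_nonneg hη.le ((norm_nonneg c).trans hc)
  · nlinarith

theorem IsMinOn.bregman_le_of_prox_le_add (hX : Convex ℝ X) (hη : 0 < η)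
    (hψ : DifferentiableAt ℝ ψ w) (hmin : IsMinOn (fun v => c v + bregman ψ v y / η) X w)
    (hw : w ∈ X) (hz : z ∈ X) {ε : ℝ}
    (happ : c z + bregman ψ z y / η ≤ c w + bregman ψ w y / η + ε) :
    bregman ψ z w ≤ η * ε := by
  have hopt := hmin.prox_optimality hX hη hψ hw hz
  have hthree := bregman_sub_bregman (ψ := ψ) z w y
  have happ' : η * (c z - c w) + (bregman ψ z y - bregman ψ w y) ≤ η * ε := by
    have := mul_le_mul_of_nonneg_left happ hη.le
    simp only [mul_add, mul_div_cancel₀ _ hη.ne'] at this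
    linarith
  rw [map_sub] at hopt
  linarith

theorem norm_sub_le_of_bregman_le (hσ : 0 < σ)
    (hψsc : ∀ a ∈ X, ∀ b ∈ X, σ / 2 * ‖a - b‖ ^ 2 ≤ bregman ψ a b) {a b : E} (ha : a ∈ X)
    (hb : b ∈ X) {r : ℝ} (hr : 0 ≤ r) (h : bregman ψ a b ≤ σ / 2 * r ^ 2) : ‖a - b‖ ≤ r :=
  (pow_le_pow_iff_left₀ (norm_nonneg _) hr two_ne_zero).1
    (le_of_mul_le_mul_left ((hψsc a ha b hb).trans h) (by positivity))

end ProxStep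

end

theorem dmd_gc_iterate_stability_general
    {E : Type*} [NormedAddCommGroup E] [NormedSpace ℝ E]
    (X : Set E) (hX : Convex ℝ X)
    (T : ℕ) (d : ℕ → ℕ)
    (F : ℕ → Finset ℕ)
    (hF : ∀ t, F t = (Finset.Icc 1 T).filter (fun k => k + d k - 1 = t))
    (f : ℕ → E → ℝ) (Gstar : ℝ)
    (hG : ∀ t ∈ Finset.Icc 1 T, ∀ z ∈ X, ‖fderiv ℝ (f t) z‖ ≤ Gstar)
    (ψ : E → ℝ) (σ ξ : ℝ) (hσ : 0 < σ) (hξ : 0 < ξ)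
    (hψdiff : Differentiable ℝ ψ)
    (B : E → E → ℝ)
    (hB : ∀ a b, B a b = ψ a - ψ b - fderiv ℝ ψ b (a - b))
    (hψsc : ∀ a ∈ X, ∀ b ∈ X, B a b ≥ σ / 2 * ‖a - b‖ ^ 2)
    (η : ℝ) (hη : 0 < η)
    (xx : ℕ → ℕ → E)
    (hxxmem : ∀ t ∈ Finset.Icc 1 T, ∀ i ≤ (F t).card, xx t i ∈ X)
    (A : ℕ → ℕ → E → ℝ)
    (hA : ∀ t k z, A t k z =
      fderiv ℝ (f k) (xx t ((F t).filter (fun s => s < k)).card) z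
        + B z (xx t ((F t).filter (fun s => s < k)).card) / η)
    (hopt : ∀ t ∈ Finset.Icc 1 T, ∀ k ∈ F t, ∃ ystar ∈ X,
      IsMinOn (A t k) X ystar ∧
        A t k (xx t (((F t).filter (fun s => s < k)).card + 1))
          ≤ A t k ystar + η ^ 3 / (2 * σ))
    :
    ∀ t ∈ Finset.Icc 1 T, ∀ k ∈ F t,
      ‖xx t (((F t).filter (fun s => s < k)).card + 1)
          - xx t ((F t).filter (fun s => s < k)).card‖
        ≤ (η * Gstar + 2 * η ^ 2) / σ + η ^ 2 * ξ * Gstar / σ ^ 2 := by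
  intro t ht k hk
  have hkT : k ∈ Icc 1 T := (mem_filter.1 (hF t ▸ hk)).1
  set i := ((F t).filter (fun s => s < k)).card
  have hi : i < (F t).card := card_lt_card (filter_ssubset.2 ⟨k, hk, lt_irrefl k⟩)
  have hyX : xx t i ∈ X := hxxmem t ht i hi.le
  have hzX : xx t (i + 1) ∈ X := hxxmem t ht (i + 1) hi
  have hBψ : B = bregman ψ := funext₂ hB
  have hAk : A t k = fun v => fderiv ℝ (f k) (xx t i) v + bregman ψ v (xx t i) / η :=
    funext fun v => by rw [hA, hBψ]
  obtain ⟨w, hwX, hmin, happ⟩ := hopt t ht k hk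
  rw [hAk] at hmin happ
  rw [hBψ] at hψsc
  have hGk := hG k hkT _ hyX
  have hwy := hmin.norm_sub_le_of_prox hX hσ hη (hψdiff w) hψsc hGk hwX hyX
  have hzw : ‖xx t (i + 1) - w‖ ≤ η ^ 2 / σ :=
    norm_sub_le_of_bregman_le hσ hψsc hzX hwX (by positivity)
      ((hmin.bregman_le_of_prox_le_add hX hη (hψdiff w) hwX hzX happ).trans_eq
        (by field_simp))
  have hslack : 0 ≤ η ^ 2 * ξ * Gstar / σ ^ 2 := by
    have := (norm_nonneg _).trans hGk
    positivity
  calc ‖xx t (i + 1) - xx t i‖ ≤ ‖xx t (i + 1) - w‖ + ‖w - xx t i‖ :=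
        norm_sub_le_norm_sub_add_norm_sub _ _ _
    _ ≤ η ^ 2 / σ + η * Gstar / σ := add_le_add hzw hwy
    _ ≤ (η * Gstar + 2 * η ^ 2) / σ + η ^ 2 * ξ * Gstar / σ ^ 2 := by
        have : 0 ≤ η ^ 2 / σ := by positivity
        rw [add_div, mul_div_assoc 2, two_mul]
        linarith

/-- DMD-GC stability of consecutive intermediate iterates (Lemma 7). -/
theorem dmd_gc_iterate_stability
    {E : Type*} [NormedAddCommGroup E] [NormedSpace ℝ E]
    (X : Set E) (hXne : X.Nonempty) (hX : Convex ℝ X)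
    (R : ℝ) (hR : ∀ z ∈ X, ‖z‖ ≤ R)
    (T : ℕ) (hT : 1 ≤ T) (d : ℕ → ℕ)
    (hd : ∀ t ∈ Finset.Icc 1 T, 1 ≤ d t ∧ t + d t - 1 ≤ T)
    (F : ℕ → Finset ℕ)
    (hF : ∀ t, F t = (Finset.Icc 1 T).filter (fun k => k + d k - 1 = t))
    (f : ℕ → E → ℝ) (Gstar : ℝ)
    (hfdiff : ∀ t ∈ Finset.Icc 1 T, Differentiable ℝ (f t))
    (hfconv : ∀ t ∈ Finset.Icc 1 T, ConvexOn ℝ X (f t))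
    (hG : ∀ t ∈ Finset.Icc 1 T, ∀ z ∈ X, ‖fderiv ℝ (f t) z‖ ≤ Gstar)
    (ψ : E → ℝ) (σ ξ : ℝ) (hσ : 0 < σ) (hξ : 0 < ξ)
    (hψdiff : Differentiable ℝ ψ)
    (B : E → E → ℝ)
    (hB : ∀ a b, B a b = ψ a - ψ b - fderiv ℝ ψ b (a - b))
    (hψsc : ∀ a ∈ X, ∀ b ∈ X, B a b ≥ σ / 2 * ‖a - b‖ ^ 2)
    (hψlip : ∀ a ∈ X, ∀ b ∈ X,
      ‖fderiv ℝ ψ a - fderiv ℝ ψ b‖ ≤ ξ * Gstar * ‖a - b‖)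
    (η : ℝ) (hη : 0 < η)
    (x : ℕ → E) (xx : ℕ → ℕ → E) (hx1 : x 1 ∈ X)
    (hxxmem : ∀ t ∈ Finset.Icc 1 T, ∀ i ≤ (F t).card, xx t i ∈ X)
    (hxx0 : ∀ t ∈ Finset.Icc 1 T, xx t 0 = x t)
    (hxnext : ∀ t ∈ Finset.Icc 1 T, x (t + 1) = xx t (F t).card)
    (A : ℕ → ℕ → E → ℝ)
    (hA : ∀ t k z, A t k z =
      fderiv ℝ (f k) (xx t ((F t).filter (fun s => s < k)).card) z
        + B z (xx t ((F t).filter (fun s => s < k)).card) / η)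
    (hopt : ∀ t ∈ Finset.Icc 1 T, ∀ k ∈ F t, ∃ ystar ∈ X,
      IsMinOn (A t k) X ystar ∧
        A t k (xx t (((F t).filter (fun s => s < k)).card + 1))
          ≤ A t k ystar + η ^ 3 / (2 * σ))
    :
    ∀ t ∈ Finset.Icc 1 T, ∀ k ∈ F t,
      ‖xx t (((F t).filter (fun s => s < k)).card + 1)
          - xx t ((F t).filter (fun s => s < k)).card‖
        ≤ (η * Gstar + 2 * η ^ 2) / σ + η ^ 2 * ξ * Gstar / σ ^ 2 :=
  dmd_gc_iterate_stability_general X hX T d F hF f Gstar hG ψ σ ξ hσ hξ hψdiff B hB hψsc η hη xx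
    hxxmem A hA hopt
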